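/- arXiv:2404.14245 — 3 statements merged into one kernel-verified Lean document; each statement's English description precedes it below -/
import Mathlib

section
/- If Σ is a finite alphabet, f : List Σ → ℕ is in #FA, and c ∈ ℕ, then each of the indicator functions w ↦ (1 if f(w) = c else 0), w ↦ (1 if f(w) ≤ c else 0), and w ↦ (1 if f(w) ≥ c else 0) is in #FA. -/
/-- A function `f : List α → ℕ` on words over a finite alphabet `α` is in #FA
(computed by a finite ℕ-weighted automaton) if there are matrices `A σ` and
vectors `a`, `b` over ℕ such that `f w = aᵀ · A w₁ ⋯ A wₗ · b`. -/
def InFA {α : Type} [Fintype α] (f : List α → ℕ) : Prop :=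
  ∃ (n : ℕ) (A : α → Matrix (Fin n) (Fin n) ℕ) (a b : Fin n → ℕ),
    ∀ w : List α, f w = dotProduct a (Matrix.mulVec (List.prod (List.map A w)) b)

/-!
Truncation `x ↦ min x N` is a semiring homomorphism from `ℕ` onto a finite semiring, and each
indicator function factors through it for `N = c + 1`. Over a finite semiring the row vectors
`aᵀ A(w₁) ⋯ A(wₖ)` range over a finite set, so they are the states of a deterministic automaton,
and a deterministic automaton is a weighted one with 0/1 transition matrices.
-/

open Matrix

theorem InFA.of_fintype {α ι : Type} [Fintype α] [Fintype ι] [DecidableEq ι] {f : List α → ℕ}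
    (A : α → Matrix ι ι ℕ) (a b : ι → ℕ) (h : ∀ w, f w = a ⬝ᵥ (w.map A).prod *ᵥ b) :
    InFA f := by
  let e := Fintype.equivFin ι
  refine ⟨Fintype.card ι, fun σ => reindex e e (A σ), a ∘ e.symm, b ∘ e.symm, fun w => ?_⟩
  have hprod : (w.map fun σ => reindex e e (A σ)).prod = reindex e e (w.map A).prod := by
    simpa [List.map_map, Function.comp_def] using
      (map_list_prod (reindexRingEquiv ℕ e) (w.map A)).symm
  rw [hprod, reindex_apply, submatrix_mulVec_equiv, Equiv.symm_symm,
    comp_equiv_dotProduct_comp_equiv, Function.comp_assoc, Equiv.symm_comp_self,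
    Function.comp_id, h]

section Transition

variable {S : Type*} [DecidableEq S]

def transitionMatrix (R : Type*) [Zero R] [One R] (δ : S → S) : Matrix S S R :=
  (1 : Matrix S S R).submatrix δ id

variable [Fintype S]

theorem transitionMatrix_mulVec {R : Type*} [NonAssocSemiring R] (δ : S → S) (v : S → R) :
    transitionMatrix R δ *ᵥ v = v ∘ δ := by
  ext s
  simp [transitionMatrix, mulVec, dotProduct, one_apply]

theorem list_prod_transitionMatrix_mulVec {R α : Type*} [Semiring R] (δ : S → α → S) (w : List α)
    (v : S → R) :
    (w.map fun σ => transitionMatrix R (δ · σ)).prod *ᵥ v = fun s => v (w.foldl δ s) := by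
  induction w with
  | nil => simp
  | cons σ w ih =>
    rw [List.map_cons, List.prod_cons, ← mulVec_mulVec, ih, transitionMatrix_mulVec]
    rfl

end Transition

theorem inFA_of_dfa {α S : Type} [Fintype α] [Finite S] (δ : S → α → S) (s₀ : S)
    (out : S → ℕ) : InFA fun w => out (w.foldl δ s₀) := by
  classical
  have := Fintype.ofFinite S
  refine InFA.of_fintype (fun σ => transitionMatrix ℕ (δ · σ)) (Pi.single s₀ 1) out fun w => ?_
  rw [list_prod_transitionMatrix_mulVec, single_one_dotProduct]

theorem List.foldl_vecMul {α R n : Type*} [Semiring R] [Fintype n] [DecidableEq n]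
    (M : α → Matrix n n R) (w : List α) (v : n → R) :
    w.foldl (fun u σ => u ᵥ* M σ) v = v ᵥ* (w.map M).prod := by
  induction w generalizing v with
  | nil => simp
  | cons σ w ih => simp [ih, vecMul_vecMul]

theorem InFA.ringHom_comp {α R : Type} [Fintype α] [Semiring R] [Finite R] {f : List α → ℕ}
    (hf : InFA f) (φ : ℕ →+* R) (g : R → ℕ) : InFA fun w => g (φ (f w)) := by
  obtain ⟨n, A, a, b, hfab⟩ := hf
  have hrun : ∀ w : List α, w.foldl (fun u σ => u ᵥ* (A σ).map φ) (φ ∘ a)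
      = φ ∘ (a ᵥ* (w.map A).prod) := by
    intro w
    have hprod : (w.map fun σ => (A σ).map φ) = (w.map A).map φ.mapMatrix := by
      simp [List.map_map, Function.comp_def]
    ext i
    rw [List.foldl_vecMul, hprod, ← map_list_prod, Function.comp_apply, RingHom.map_vecMul]
    rfl
  convert inFA_of_dfa (fun u σ => u ᵥ* (A σ).map φ) (φ ∘ a) (fun u => g (u ⬝ᵥ φ ∘ b))
    using 3 with w
  rw [hrun, hfab, dotProduct_mulVec, RingHom.map_dotProduct]

theorem min_mul_eq_min_mul_of_min_eq {x y N : ℕ} (h : min x N = min y N) (z : ℕ) :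
    min (x * z) N = min (y * z) N := by
  rcases Nat.eq_zero_or_pos z with rfl | hz
  · simp
  obtain rfl | ⟨hx, hy⟩ : x = y ∨ N ≤ x ∧ N ≤ y := by omega
  · rfl
  · have := Nat.le_mul_of_pos_right x hz
    have := Nat.le_mul_of_pos_right y hz
    omega

def capCon (N : ℕ) : RingCon ℕ where
  r x y := min x N = min y N
  iseqv := ⟨fun _ => rfl, Eq.symm, Eq.trans⟩
  add' := by intros; omega
  mul' {x y z t} hxy hzt := by
    rw [min_mul_eq_min_mul_of_min_eq hxy, mul_comm y, mul_comm y,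
      min_mul_eq_min_mul_of_min_eq hzt]

theorem capCon_mk'_min (N x : ℕ) : (capCon N).mk' (min x N) = (capCon N).mk' x :=
  (RingCon.eq _).2 (by simp [capCon])

instance (N : ℕ) : Finite (capCon N).Quotient :=
  Finite.of_surjective (fun i : Fin (N + 1) => (capCon N).mk' i) fun q => by
    obtain ⟨x, rfl⟩ := (capCon N).mk'_surjective q
    exact ⟨⟨min x N, by omega⟩, capCon_mk'_min N x⟩

theorem InFA.comp_of_min_invariant {α : Type} [Fintype α] {f : List α → ℕ} (hf : InFA f)
    (N : ℕ) (g : ℕ → ℕ) (hg : ∀ x, g (min x N) = g x) : InFA fun w => g (f w) := by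
  let φ := (capCon N).mk'
  let r := Function.surjInv (capCon N).mk'_surjective
  have hgr : ∀ x, g (r (φ x)) = g x := fun x => by
    have h : min (r (φ x)) N = min x N := (RingCon.eq _).1 (Function.surjInv_eq _ (φ x))
    rw [← hg, h, hg]
  simpa only [Function.comp_apply, hgr] using hf.ringHom_comp φ (g ∘ r)

/-- #FA contains the indicator functions of comparison with a constant. -/
theorem inFA_indicator_comparisons {α : Type} [Fintype α] (f : List α → ℕ)
    (hf : InFA f) (c : ℕ) :
    InFA (fun w => if f w = c then 1 else 0) ∧
    InFA (fun w => if f w ≤ c then 1 else 0) ∧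
    InFA (fun w => if f w ≥ c then 1 else 0) :=
  ⟨hf.comp_of_min_invariant (c + 1) (fun x => if x = c then 1 else 0) fun x => by
      split_ifs <;> omega,
    hf.comp_of_min_invariant (c + 1) (fun x => if x ≤ c then 1 else 0) fun x => by
      split_ifs <;> omega,
    hf.comp_of_min_invariant (c + 1) (fun x => if x ≥ c then 1 else 0) fun x => by
      split_ifs <;> omega⟩
end

section
/- Let Σ be a finite alphabet, let f : List Σ → ℕ be in #FA, and let φ ∈ ℚ[x] be an integer-valued polynomial (i.e., φ(k) ∈ ℤ for every k ∈ ℤ). Then the function w ↦ max(φ(f(w)), 0), viewed as a function List Σ → ℕ, is in #FA. -/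
/-!
On naturals, `n ↦ φ n` is an integer sequence `ψ` whose `(deg φ + 1)`-st forward difference
vanishes. Hence either `ψ` is eventually `≤ 0`, or at some `N` all forward differences
`Δᵏψ N` are `≥ 0`; by Newton's formula, in both cases
`max (ψ n) 0 = max (ψ (min n N)) 0 + ∑ₖ dₖ · C(n - N, k + 1)` with `dₖ ∈ ℕ`.
So it suffices that #FA is closed under sums, natural multiples, `f ↦ t (min f N)`,
`f ↦ f - N` and `f ↦ C(f, k)`. The last three come from one principle: if finitely many
functions of the run vector `u = a A(w₁) ⋯ A(wₗ)` span an ℕ-cone that is stable under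
`u ↦ u A(σ)`, an automaton can carry these values instead of `u`. For truncation the family is
`[min u N = q] · (1 or uᵢ - N)`; for binomials it is the products `∏ᵢ C(uᵢ, eᵢ)` of total
degree `≤ k`, stable by Vandermonde's identity and the expansion of `C(x, p) C(x, q)` in the
`C(x, r)`.
-/

open Polynomial

open Matrix Filter

theorem Matrix.vecMul_list_prod_map_of_intertwine {α R m n : Type*} [Semiring R]
    [Fintype m] [Fintype n] [DecidableEq m] [DecidableEq n]
    {A : α → Matrix m m R} {T : α → Matrix n n R} {β : (m → R) → n → R}
    (h : ∀ σ u, β u ᵥ* T σ = β (u ᵥ* A σ)) (w : List α) (u : m → R) :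
    β u ᵥ* (w.map T).prod = β (u ᵥ* (w.map A).prod) := by
  induction w generalizing u with
  | nil => simp
  | cons σ w ih => simp only [List.map_cons, List.prod_cons, ← vecMul_vecMul, h, ih]

namespace InFA

variable {α : Type} [Fintype α]

theorem exists_vecMul {f : List α → ℕ} (hf : InFA f) :
    ∃ (n : ℕ) (A : α → Matrix (Fin n) (Fin n) ℕ) (a b : Fin n → ℕ),
      ∀ w, f w = a ᵥ* (w.map A).prod ⬝ᵥ b := by
  obtain ⟨n, A, a, b, hf⟩ := hf
  exact ⟨n, A, a, b, fun w => (hf w).trans (dotProduct_mulVec _ _ _)⟩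

theorem of_fintype_s10 {ι : Type*} [Fintype ι] [DecidableEq ι] (A : α → Matrix ι ι ℕ)
    (a b : ι → ℕ) : InFA fun w => a ᵥ* (w.map A).prod ⬝ᵥ b := by
  let e := Fintype.equivFin ι
  let r := reindexAlgEquiv ℕ ℕ e
  refine ⟨Fintype.card ι, fun σ => r (A σ), a ∘ e.symm, b ∘ e.symm, fun w => ?_⟩
  have hprod : (w.map fun σ => r (A σ)).prod = r (w.map A).prod := by
    rw [map_list_prod, List.map_map]; rfl
  show _ = _ ⬝ᵥ _
  rw [hprod, dotProduct_mulVec]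
  simp [r, reindex_apply, submatrix_vecMul_equiv, Function.comp_assoc]

theorem zero : InFA fun _ : List α => 0 :=
  ⟨0, fun _ => 0, 0, 0, fun _ => rfl⟩

theorem add {f g : List α → ℕ} (hf : InFA f) (hg : InFA g) : InFA fun w => f w + g w := by
  obtain ⟨n, A, a, b, hf⟩ := hf.exists_vecMul
  obtain ⟨m, B, c, d, hg⟩ := hg.exists_vecMul
  have hprod : ∀ w : List α, (w.map fun σ => fromBlocks (A σ) 0 0 (B σ)).prod
      = fromBlocks (w.map A).prod 0 0 (w.map B).prod := by
    intro w
    induction w with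
    | nil => simp [← fromBlocks_one]
    | cons σ w ih => simp [ih, fromBlocks_multiply]
  convert of_fintype_s10 (fun σ => fromBlocks (A σ) 0 0 (B σ)) (Sum.elim a c) (Sum.elim b d) using 2
    with w
  simp [hf, hg, hprod, vecMul_fromBlocks, sumElim_dotProduct_sumElim]

theorem const_mul {f : List α → ℕ} (hf : InFA f) (c : ℕ) : InFA fun w => c * f w := by
  obtain ⟨n, A, a, b, hf⟩ := hf.exists_vecMul
  convert of_fintype_s10 A a (c • b) using 2 with w
  rw [hf, dotProduct_smul, smul_eq_mul]

theorem sum {β : Type*} (s : Finset β) {f : β → List α → ℕ} (hf : ∀ i ∈ s, InFA (f i)) :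
    InFA fun w => ∑ i ∈ s, f i w := by
  classical
  induction s using Finset.induction_on with
  | empty => simpa using zero
  | insert i s hi ih =>
    simp only [Finset.sum_insert hi]
    exact (hf i (s.mem_insert_self i)).add (ih fun j hj => hf j (Finset.mem_insert_of_mem hj))

theorem of_intertwine {ι Q : Type*} [Fintype ι] [DecidableEq ι] [Fintype Q] [DecidableEq Q]
    {A : α → Matrix ι ι ℕ} {T : α → Matrix Q Q ℕ} {β : (ι → ℕ) → Q → ℕ}
    (h : ∀ σ u, β u ᵥ* T σ = β (u ᵥ* A σ)) (a : ι → ℕ) (c : Q → ℕ) :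
    InFA fun w => β (a ᵥ* (w.map A).prod) ⬝ᵥ c := by
  simpa only [vecMul_list_prod_map_of_intertwine h] using of_fintype_s10 T (β a) c

theorem of_mem_span {ι Q : Type*} [Fintype ι] [DecidableEq ι] [Fintype Q]
    {A : α → Matrix ι ι ℕ} {β : Q → (ι → ℕ) → ℕ}
    (hβ : ∀ σ q, (fun u => β q (u ᵥ* A σ)) ∈ Submodule.span ℕ (Set.range β))
    (a : ι → ℕ) {F : (ι → ℕ) → ℕ} (hF : F ∈ Submodule.span ℕ (Set.range β)) :
    InFA fun w => F (a ᵥ* (w.map A).prod) := by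
  classical
  choose T hT using fun σ q => (Submodule.mem_span_range_iff_exists_fun ℕ).1 (hβ σ q)
  obtain ⟨c, rfl⟩ := (Submodule.mem_span_range_iff_exists_fun ℕ).1 hF
  have h : ∀ σ u, (fun q => β q u) ᵥ* of (fun p q => T σ q p) = fun q => β q (u ᵥ* A σ) := by
    intro σ u
    ext q
    have := congrFun (hT σ q) u
    simp only [Finset.sum_apply, Pi.smul_apply, smul_eq_mul] at this
    simp [← this, vecMul, dotProduct, mul_comm]
  convert of_intertwine h a c using 2 with w
  simp [dotProduct, mul_comm]

end InFA

namespace Truncation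

variable {ι : Type*} [Fintype ι] (N : ℕ)

def cap (u : ι → ℕ) : ι → Fin (N + 1) :=
  fun i => ⟨min (u i) N, Nat.lt_succ_of_le (min_le_right _ _)⟩

/-- The extra coordinate `none` carries the constant `1`, so that the update of `excess` along a
transition is linear (`excess_vecMul`). -/
def excess (u : ι → ℕ) : Option ι → ℕ :=
  fun x => x.elim 1 fun i => u i - N

def excessCoeff (q : ι → Fin (N + 1)) (c : ι → ℕ) : Option ι → ℕ :=
  fun x => if N ≤ (Fin.val ∘ q) ⬝ᵥ c then x.elim ((Fin.val ∘ q) ⬝ᵥ c - N) c else 0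

def excessMatrix (A : Matrix ι ι ℕ) (q : ι → Fin (N + 1)) :
    Matrix (Option ι) (Option ι) ℕ :=
  of fun x x' => x'.elim (x.elim 1 fun _ => 0) fun j => excessCoeff N q (fun i => A i j) x

theorem dotProduct_eq_cap_add (u c : ι → ℕ) :
    u ⬝ᵥ c = (Fin.val ∘ cap N u) ⬝ᵥ c + (fun i => u i - N) ⬝ᵥ c := by
  simp only [dotProduct, ← Finset.sum_add_distrib, ← add_mul]
  exact Finset.sum_congr rfl fun i _ => by
    simp only [Function.comp_apply, cap, mul_eq_mul_right_iff]; omega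

-- A coordinate above `N` with positive weight alone pushes the truncated sum up to `N`.
theorem tsub_dotProduct_eq_zero_of_lt {u c : ι → ℕ} (h : (Fin.val ∘ cap N u) ⬝ᵥ c < N) :
    (fun i => u i - N) ⬝ᵥ c = 0 := by
  by_contra hne
  obtain ⟨i, -, hi⟩ := Finset.exists_ne_zero_of_sum_ne_zero hne
  have hN : N ≤ (Fin.val ∘ cap N u) i * c i := by
    simp only [Function.comp_apply, cap, ne_eq, mul_eq_zero, not_or] at hi ⊢
    rw [min_eq_right (by omega)]
    exact Nat.le_mul_of_pos_right N (Nat.pos_of_ne_zero hi.2)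
  exact h.not_ge (hN.trans (Finset.single_le_sum (f := fun j => (Fin.val ∘ cap N u) j * c j)
    (fun j _ => Nat.zero_le _) (Finset.mem_univ i)))

theorem min_dotProduct_eq (u c : ι → ℕ) :
    min (u ⬝ᵥ c) N = min ((Fin.val ∘ cap N u) ⬝ᵥ c) N := by
  rw [dotProduct_eq_cap_add N u c]
  rcases lt_or_ge ((Fin.val ∘ cap N u) ⬝ᵥ c) N with h | h
  · rw [tsub_dotProduct_eq_zero_of_lt N h, add_zero]
  · omega

theorem excess_dotProduct (u : ι → ℕ) (v : Option ι → ℕ) :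
    excess N u ⬝ᵥ v = v none + (fun i => u i - N) ⬝ᵥ fun i => v (some i) := by
  simp [excess, dotProduct, Fintype.sum_option]

theorem dotProduct_tsub_eq (u c : ι → ℕ) :
    u ⬝ᵥ c - N = excess N u ⬝ᵥ excessCoeff N (cap N u) c := by
  rw [dotProduct_eq_cap_add N u c, excess_dotProduct]
  by_cases h : N ≤ (Fin.val ∘ cap N u) ⬝ᵥ c
  · simp only [excessCoeff, if_pos h, Option.elim]
    exact Nat.sub_add_comm h
  · simp only [excessCoeff, if_neg h, tsub_dotProduct_eq_zero_of_lt N (not_le.1 h), add_zero,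
      dotProduct_zero']
    omega

theorem cap_vecMul (u : ι → ℕ) (A : Matrix ι ι ℕ) :
    cap N (u ᵥ* A) = cap N ((Fin.val ∘ cap N u) ᵥ* A) := by
  ext j
  exact min_dotProduct_eq N u fun i => A i j

theorem excess_vecMul (u : ι → ℕ) (A : Matrix ι ι ℕ) :
    excess N (u ᵥ* A) = excess N u ᵥ* excessMatrix N A (cap N u) := by
  ext (_ | j)
  · simp [excess, excessMatrix, vecMul, dotProduct, Fintype.sum_option]
  · exact dotProduct_tsub_eq N u fun i => A i j

variable [DecidableEq ι]

def state (u : ι → ℕ) : (ι → Fin (N + 1)) × Option ι → ℕ :=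
  fun p => if cap N u = p.1 then excess N u p.2 else 0

def transition (A : Matrix ι ι ℕ) :
    Matrix ((ι → Fin (N + 1)) × Option ι) ((ι → Fin (N + 1)) × Option ι) ℕ :=
  of fun p p' =>
    if cap N ((Fin.val ∘ p.1) ᵥ* A) = p'.1 then excessMatrix N A p.1 p.2 p'.2 else 0

theorem state_dotProduct (u : ι → ℕ) (g : (ι → Fin (N + 1)) × Option ι → ℕ) :
    state N u ⬝ᵥ g = excess N u ⬝ᵥ fun x => g (cap N u, x) := by
  simp [state, dotProduct, Fintype.sum_prod_type, ite_mul]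

theorem state_vecMul (u : ι → ℕ) (A : Matrix ι ι ℕ) :
    state N u ᵥ* transition N A = state N (u ᵥ* A) := by
  ext p'
  rw [vecMul, state_dotProduct]
  simp only [transition, of_apply, ← cap_vecMul, state]
  split_ifs
  · rw [excess_vecMul]; rfl
  · simp

end Truncation

namespace InFA

variable {α : Type} [Fintype α] {f : List α → ℕ}

theorem tsub (hf : InFA f) (N : ℕ) : InFA fun w => f w - N := by
  classical
  obtain ⟨n, A, a, b, hf⟩ := hf.exists_vecMul
  convert of_intertwine (fun σ u => Truncation.state_vecMul N u (A σ)) a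
    (fun p => Truncation.excessCoeff N p.1 b p.2) using 2 with w
  rw [hf, Truncation.state_dotProduct, Truncation.dotProduct_tsub_eq]

theorem comp_min (hf : InFA f) (N : ℕ) (t : ℕ → ℕ) : InFA fun w => t (min (f w) N) := by
  classical
  obtain ⟨n, A, a, b, hf⟩ := hf.exists_vecMul
  convert of_intertwine (fun σ u => Truncation.state_vecMul N u (A σ)) a
    (fun p => p.2.elim (t (min ((Fin.val ∘ p.1) ⬝ᵥ b) N)) fun _ => 0) using 2 with w
  rw [hf, Truncation.state_dotProduct, Truncation.excess_dotProduct,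
    Truncation.min_dotProduct_eq]
  simp [dotProduct]

end InFA

-- Vandermonde for `C(p + y, q)`, then `C(p + y, p) C(y, l) = C(p + y, p + l) C(p + l, p)`.
theorem Nat.choose_mul_choose_eq_sum (x p q : ℕ) :
    x.choose p * x.choose q =
      ∑ j ∈ Finset.range (q + 1), p.choose j * (p + q - j).choose p * x.choose (p + q - j) := by
  rcases lt_or_ge x p with hx | hx
  · rw [Nat.choose_eq_zero_of_lt hx, zero_mul]
    refine (Finset.sum_eq_zero fun j hj => ?_).symm
    rw [Nat.choose_eq_zero_of_lt (n := x) (k := p + q - j) (by rw [Finset.mem_range] at hj; omega),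
      mul_zero]
  obtain ⟨y, rfl⟩ := Nat.exists_eq_add_of_le hx
  rw [Nat.add_choose_eq p y q,
    Finset.Nat.sum_antidiagonal_eq_sum_range_succ (fun j l => p.choose j * y.choose l),
    Finset.mul_sum]
  refine Finset.sum_congr rfl fun j hj => ?_
  have key := Nat.choose_mul (n := p + y) (k := p + (q - j)) (s := p) (by omega)
  rw [Nat.add_sub_cancel_left, Nat.add_sub_cancel_left] at key
  rw [show p + q - j = p + (q - j) by rw [Finset.mem_range] at hj; omega, mul_left_comm, ← key]
  ring

section BinomialCone

variable {ι κ : Type*} [Fintype ι] [Fintype κ]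

def binomialMonomial (e u : ι → ℕ) : ℕ := ∏ i, (u i).choose (e i)

def binomialCone (ι : Type*) [Fintype ι] (d : ℕ) : Submodule ℕ ((ι → ℕ) → ℕ) :=
  Submodule.span ℕ (binomialMonomial '' {e | ∑ i, e i ≤ d})

theorem binomialMonomial_zero : binomialMonomial (0 : ι → ℕ) = 1 := by
  ext u
  simp [binomialMonomial]

theorem binomialMonomial_mem {e : ι → ℕ} {d : ℕ} (h : ∑ i, e i ≤ d) :
    binomialMonomial e ∈ binomialCone ι d :=
  Submodule.subset_span ⟨e, h, rfl⟩

theorem one_mem_binomialCone : (1 : (ι → ℕ) → ℕ) ∈ binomialCone ι 0 :=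
  binomialMonomial_zero (ι := ι) ▸ binomialMonomial_mem (by simp)

theorem binomialCone_mono {d d' : ℕ} (h : d ≤ d') : binomialCone ι d ≤ binomialCone ι d' :=
  Submodule.span_mono (Set.image_mono fun _ he => le_trans he h)

theorem binomialMonomial_mul_mem (e e' : ι → ℕ) :
    binomialMonomial e * binomialMonomial e' ∈ binomialCone ι (∑ i, (e i + e' i)) := by
  classical
  have expand : binomialMonomial e * binomialMonomial e' =
      ∑ J ∈ Fintype.piFinset fun i => Finset.range (e' i + 1),
        (∏ i, (e i).choose (J i) * (e i + e' i - J i).choose (e i)) •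
          binomialMonomial fun i => e i + e' i - J i := by
    ext u
    simp only [binomialMonomial, Pi.mul_apply, ← Finset.prod_mul_distrib,
      Nat.choose_mul_choose_eq_sum, Finset.prod_univ_sum, Finset.sum_apply, Pi.smul_apply,
      smul_eq_mul]
  rw [expand]
  exact Submodule.sum_mem _ fun J _ => Submodule.smul_mem _ _
    (binomialMonomial_mem (Finset.sum_le_sum fun i _ => Nat.sub_le _ _))

theorem mul_mem_binomialCone {F G : (ι → ℕ) → ℕ} {d d' : ℕ}
    (hF : F ∈ binomialCone ι d) (hG : G ∈ binomialCone ι d') :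
    F * G ∈ binomialCone ι (d + d') := by
  have : binomialCone ι d * binomialCone ι d' ≤ binomialCone ι (d + d') := by
    rw [binomialCone, binomialCone, Submodule.span_mul_span, Submodule.span_le]
    rintro _ ⟨_, ⟨e, he, rfl⟩, _, ⟨e', he', rfl⟩, rfl⟩
    refine binomialCone_mono ?_ (binomialMonomial_mul_mem e e')
    rw [Finset.sum_add_distrib]
    exact add_le_add he he'
  exact this (Submodule.mul_mem_mul hF hG)

theorem prod_mem_binomialCone {β : Type*} (s : Finset β) {F : β → (ι → ℕ) → ℕ} {d : β → ℕ}
    (h : ∀ j ∈ s, F j ∈ binomialCone ι (d j)) :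
    ∏ j ∈ s, F j ∈ binomialCone ι (∑ j ∈ s, d j) := by
  classical
  induction s using Finset.induction_on with
  | empty => simpa using one_mem_binomialCone
  | insert j s hj ih =>
    rw [Finset.prod_insert hj, Finset.sum_insert hj]
    exact mul_mem_binomialCone (h j (s.mem_insert_self j))
      (ih fun i hi => h i (Finset.mem_insert_of_mem hi))

theorem choose_apply_mem_binomialCone (i : ι) (m : ℕ) :
    (fun u : ι → ℕ => (u i).choose m) ∈ binomialCone ι m := by
  classical
  convert binomialMonomial_mem (e := Pi.single i m) (d := m) (by simp) using 1
  ext u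
  rw [binomialMonomial, Finset.prod_eq_single i (fun j _ hj => by simp [Pi.single_eq_of_ne hj])
    (by simp)]
  simp

theorem choose_sum_mem_binomialCone {β : Type*} (s : Finset β) {g : β → (ι → ℕ) → ℕ}
    (h : ∀ j ∈ s, ∀ m, (fun u => (g j u).choose m) ∈ binomialCone ι m) (m : ℕ) :
    (fun u => (∑ j ∈ s, g j u).choose m) ∈ binomialCone ι m := by
  classical
  induction s using Finset.induction_on generalizing m with
  | empty =>
    cases m with
    | zero => exact one_mem_binomialCone
    | succ m => exact (binomialCone ι (m + 1)).zero_mem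
  | insert j s hj ih =>
    have vandermonde : (fun u => (∑ i ∈ insert j s, g i u).choose m) =
        ∑ p ∈ Finset.HasAntidiagonal.antidiagonal m,
          (fun u => (g j u).choose p.1) * fun u => (∑ i ∈ s, g i u).choose p.2 := by
      ext u
      simp [Finset.sum_insert hj, Nat.add_choose_eq, Finset.sum_apply]
    rw [vandermonde]
    refine Submodule.sum_mem _ fun p hp => ?_
    rw [← Finset.HasAntidiagonal.mem_antidiagonal.1 hp]
    exact mul_mem_binomialCone (h j (s.mem_insert_self j) _)
      (ih (fun i hi => h i (Finset.mem_insert_of_mem hi)) _)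

theorem choose_dotProduct_mem_binomialCone (c : ι → ℕ) (m : ℕ) :
    (fun u => (u ⬝ᵥ c).choose m) ∈ binomialCone ι m := by
  have : ∀ u : ι → ℕ, u ⬝ᵥ c = ∑ i, ∑ _t ∈ Finset.range (c i), u i := by
    simp [dotProduct, mul_comm]
  simp only [this]
  exact choose_sum_mem_binomialCone _ (fun i _ =>
    choose_sum_mem_binomialCone _ fun _ _ => choose_apply_mem_binomialCone i) m

theorem binomialMonomial_vecMul_mem (A : Matrix κ ι ℕ) (e : ι → ℕ) :
    (fun u => binomialMonomial e (u ᵥ* A)) ∈ binomialCone κ (∑ i, e i) := by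
  have : (fun u => binomialMonomial e (u ᵥ* A)) =
      ∏ i, fun u => (u ⬝ᵥ fun j => A j i).choose (e i) := by
    ext u
    simp [binomialMonomial, Finset.prod_apply, vecMul]
  rw [this]
  exact prod_mem_binomialCone _ fun i _ => choose_dotProduct_mem_binomialCone _ _

theorem binomialCone_le_span (k : ℕ) :
    binomialCone ι k ≤ Submodule.span ℕ (Set.range
      fun q : {e : ι → Fin (k + 1) // ∑ i, (e i : ℕ) ≤ k} => binomialMonomial (Fin.val ∘ q.1)) := by
  rw [binomialCone, Submodule.span_le]
  rintro _ ⟨e, he, rfl⟩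
  have hle : ∀ i, e i < k + 1 := fun i => Nat.lt_succ_of_le
    ((Finset.single_le_sum (fun j _ => Nat.zero_le (e j)) (Finset.mem_univ i)).trans he)
  exact Submodule.subset_span ⟨⟨fun i => ⟨e i, hle i⟩, he⟩, rfl⟩

end BinomialCone

theorem InFA.choose {α : Type} [Fintype α] {f : List α → ℕ} (hf : InFA f) (k : ℕ) :
    InFA fun w => (f w).choose k := by
  obtain ⟨n, A, a, b, hf⟩ := hf.exists_vecMul
  convert InFA.of_mem_span (fun σ q => binomialCone_le_span k
      (binomialCone_mono q.2 (binomialMonomial_vecMul_mem (A σ) _))) a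
    (binomialCone_le_span k (choose_dotProduct_mem_binomialCone b k)) using 2 with w
  rw [hf]

theorem shift_eq_sum_range_fwdDiff_iter {M G : Type*} [AddCommMonoid M] [AddCommGroup G] {h : M}
    {f : M → G} {D : ℕ} (hD : (fwdDiff h)^[D + 1] f = 0) (m : ℕ) (y : M) :
    f (y + m • h) = ∑ k ∈ Finset.range (D + 1), m.choose k • (fwdDiff h)^[k] f y := by
  have vanish : ∀ k, D + 1 ≤ k → (fwdDiff h)^[k] f = 0 := fun k hk => by
    obtain ⟨j, rfl⟩ := Nat.exists_eq_add_of_le' hk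
    rw [Function.iterate_add_apply, hD]
    exact Function.iterate_fixed (fwdDiff_const h 0) j
  rw [shift_eq_sum_fwdDiff_iter h f m y]
  calc ∑ k ∈ Finset.range (m + 1), m.choose k • (fwdDiff h)^[k] f y
      = ∑ k ∈ Finset.range (m + D + 1), m.choose k • (fwdDiff h)^[k] f y :=
        Finset.sum_subset (Finset.range_subset_range.2 (by omega)) fun k _ hk => by
          rw [Nat.choose_eq_zero_of_lt (by simpa using hk), zero_smul]
    _ = ∑ k ∈ Finset.range (D + 1), m.choose k • (fwdDiff h)^[k] f y :=
        (Finset.sum_subset (Finset.range_subset_range.2 (by omega)) fun k _ hk => by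
          rw [vanish k (by simpa using hk), Pi.zero_apply, smul_zero]).symm

theorem eq_const_of_fwdDiff_eq_zero {G : Type*} [AddCommGroup G] {g : ℕ → G}
    (hg : fwdDiff 1 g = 0) : g = fun _ => g 0 := by
  funext n
  induction n with
  | zero => rfl
  | succ n ih => rw [← ih, ← sub_eq_zero]; exact congrFun hg n

theorem Int.cast_fwdDiff_iter {R : Type*} [Ring R] {ψ : ℕ → ℤ} {g : R → R}
    (hg : ∀ n : ℕ, (ψ n : R) = g n) (k n : ℕ) :
    (((fwdDiff 1)^[k] ψ n : ℤ) : R) = (fwdDiff 1)^[k] g n := by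
  simp [fwdDiff_iter_eq_sum_shift, hg]

theorem eventually_one_le_of_eventually_one_le_fwdDiff {g : ℕ → ℤ}
    (hg : ∀ᶠ n in atTop, 1 ≤ fwdDiff 1 g n) : ∀ᶠ n in atTop, 1 ≤ g n := by
  obtain ⟨N, hN⟩ := eventually_atTop.1 hg
  have grow : ∀ m : ℕ, g N + m ≤ g (N + m) := by
    intro m
    induction m with
    | zero => simp
    | succ m ih =>
      have step := hN (N + m) (by omega)
      rw [fwdDiff] at step
      rw [← add_assoc]
      push_cast
      omega
  refine eventually_atTop.2 ⟨N + (1 - g N).toNat, fun n hn => ?_⟩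
  obtain ⟨m, rfl⟩ := Nat.exists_eq_add_of_le (le_trans (Nat.le_add_right _ _) hn)
  have := grow m
  omega

section EventualSign

variable {ψ : ℕ → ℤ}

theorem eventually_one_le_fwdDiff_iter {D : ℕ} {c : ℤ} (hc : 0 < c)
    (hD : (fwdDiff 1)^[D] ψ = fun _ => c) {k : ℕ} (hk : k ≤ D) :
    ∀ᶠ n in atTop, 1 ≤ (fwdDiff 1)^[k] ψ n := by
  obtain ⟨j, rfl⟩ := Nat.exists_eq_add_of_le hk
  induction j generalizing k with
  | zero =>
    rw [add_zero] at hD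
    rw [hD]
    exact Eventually.of_forall fun _ => hc
  | succ j ih =>
    refine eventually_one_le_of_eventually_one_le_fwdDiff ?_
    rw [← Function.iterate_succ_apply' (fwdDiff 1)]
    exact ih (by rwa [show k + 1 + j = k + (j + 1) by omega]) (by omega)

theorem eventually_fwdDiff_iter_nonneg {D : ℕ} {c : ℤ} (hc : 0 < c)
    (hD : (fwdDiff 1)^[D] ψ = fun _ => c) : ∀ᶠ n in atTop, ∀ k, 0 ≤ (fwdDiff 1)^[k] ψ n := by
  have low : ∀ᶠ n in atTop, ∀ k ∈ Finset.range (D + 1), 1 ≤ (fwdDiff 1)^[k] ψ n :=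
    (eventually_all_finset _).2 fun k hk =>
      eventually_one_le_fwdDiff_iter hc hD (Nat.lt_succ_iff.1 (Finset.mem_range.1 hk))
  filter_upwards [low] with n hn k
  rcases le_or_gt k D with hk | hk
  · linarith [hn k (Finset.mem_range.2 (Nat.lt_succ_of_le hk))]
  · obtain ⟨j, rfl⟩ := Nat.exists_eq_add_of_lt hk
    rw [show D + j + 1 = j + 1 + D by omega, Function.iterate_add_apply, hD,
      Function.iterate_succ_apply, fwdDiff_const, Function.iterate_fixed (fwdDiff_const 1 0)]

theorem eventually_nonpos_or_fwdDiff_iter_nonneg {D : ℕ} (hD : (fwdDiff 1)^[D] ψ = 0) :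
    (∀ᶠ n in atTop, ψ n ≤ 0) ∨ ∀ᶠ n in atTop, ∀ k, 0 ≤ (fwdDiff 1)^[k] ψ n := by
  induction D with
  | zero => exact Or.inl (Eventually.of_forall fun n => (congrFun hD n).le)
  | succ D ih =>
    rw [Function.iterate_succ_apply'] at hD
    have hconst := eq_const_of_fwdDiff_eq_zero hD
    set c := (fwdDiff 1)^[D] ψ 0
    rcases lt_trichotomy c 0 with hc | hc | hc
    · left
      have hneg : (fwdDiff 1)^[D] (-ψ) = fun _ => -c := by
        rw [← neg_one_smul ℤ ψ, fwdDiff_iter_const_smul, hconst]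
        ext; simp
      filter_upwards [eventually_one_le_fwdDiff_iter (neg_pos.2 hc) hneg (Nat.zero_le D)] with n hn
      simp only [Function.iterate_zero, id_eq, Pi.neg_apply] at hn
      omega
    · exact ih (hconst.trans (by rw [hc]; rfl))
    · exact Or.inr (eventually_fwdDiff_iter_nonneg hc hconst)

theorem exists_toNat_eq_min_add_sum_choose {D : ℕ} (hD : (fwdDiff 1)^[D + 1] ψ = 0) :
    ∃ (N : ℕ) (d : ℕ → ℕ), ∀ n, (ψ n).toNat =
      (ψ (min n N)).toNat + ∑ k ∈ Finset.range D, d k * (n - N).choose (k + 1) := by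
  rcases eventually_nonpos_or_fwdDiff_iter_nonneg hD with hneg | hpos
  · obtain ⟨N, hN⟩ := eventually_atTop.1 hneg
    refine ⟨N, 0, fun n => ?_⟩
    rcases le_or_gt N n with hn | hn
    · simp [min_eq_right hn, Int.toNat_eq_zero.2 (hN n hn), Int.toNat_eq_zero.2 (hN N le_rfl)]
    · simp [min_eq_left hn.le]
  · obtain ⟨N, hN⟩ := eventually_atTop.1 hpos
    refine ⟨N, fun k => ((fwdDiff 1)^[k + 1] ψ N).toNat, fun n => ?_⟩
    rcases le_or_gt N n with hn | hn
    · obtain ⟨m, rfl⟩ := Nat.exists_eq_add_of_le hn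
      have hcoeff : ∀ k, (((fwdDiff 1)^[k] ψ N).toNat : ℤ) = (fwdDiff 1)^[k] ψ N := fun k =>
        Int.toNat_of_nonneg (hN N le_rfl k)
      have hψN : 0 ≤ ψ N := hN N le_rfl 0
      have newton : ψ (N + m) = (((ψ N).toNat + ∑ k ∈ Finset.range D,
          ((fwdDiff 1)^[k + 1] ψ N).toNat * m.choose (k + 1) : ℕ) : ℤ) := by
        have := shift_eq_sum_range_fwdDiff_iter hD m N
        rw [smul_eq_mul, mul_one, Finset.sum_range_succ'] at this
        push_cast [hcoeff, Int.toNat_of_nonneg hψN]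
        simp [this, add_comm, mul_comm]
      rw [min_eq_right hn, Nat.add_sub_cancel_left, newton, Int.toNat_natCast]
    · simp [min_eq_left hn.le, Nat.sub_eq_zero_of_le hn.le]

end EventualSign

/-- for `f ∈ #FA` and an integer-valued polynomial `φ ∈ ℚ[x]`, the
function `w ↦ max(φ(f(w)), 0)` (a natural number, expressed via `Int.toNat ∘ Int.floor`,
which agrees with `max(·,0)` on integer values) is in #FA. -/
theorem inFA_max_polynomial_zero {α : Type} [Fintype α] (f : List α → ℕ)
    (hf : InFA f) (φ : Polynomial ℚ)
    (hφ : ∀ k : ℤ, ∃ z : ℤ, φ.eval (k : ℚ) = (z : ℚ)) :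
    InFA (fun w => (⌊φ.eval ((f w : ℕ) : ℚ)⌋).toNat) := by
  choose ψ hψ using fun n : ℕ => hφ n
  have hψ' : ∀ n : ℕ, (ψ n : ℚ) = φ.eval (n : ℚ) := fun n => by simpa using (hψ n).symm
  have hΔ : (fwdDiff 1)^[φ.natDegree + 1] ψ = 0 := by
    ext n
    have := Int.cast_fwdDiff_iter (g := fun x => φ.eval x) hψ' (φ.natDegree + 1) n
    rw [φ.fwdDiff_iter_degree_add_one_eq_zero, Pi.zero_apply] at this
    exact_mod_cast this
  obtain ⟨N, d, hrepr⟩ := exists_toNat_eq_min_add_sum_choose hΔ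
  have hsplit : (fun w => (⌊φ.eval ((f w : ℕ) : ℚ)⌋).toNat) = fun w =>
      (ψ (min (f w) N)).toNat + ∑ k ∈ Finset.range φ.natDegree, d k * (f w - N).choose (k + 1) :=
    funext fun w => by rw [← hψ', Int.floor_intCast, hrepr]
  rw [hsplit]
  exact (hf.comp_min N fun n => (ψ n).toNat).add
    (InFA.sum _ fun k _ => ((hf.tsub N).choose (k + 1)).const_mul (d k))
end

section
/- Let k ≥ 1 and A ∈ Matrix (Fin k) (Fin k) ℕ, and let u, v ∈ Fin k. Then the function n ↦ (A^n)_{u,v} is an ultimately almost PORC function. -/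
/-- `g ∈ 2^{Θ(n)}` for a rational-valued function: there are real constants
`γ₁, γ₂ > 0` and `N'` with `2^{γ₁ n} ≤ g n ≤ 2^{γ₂ n}` for all `n ≥ N'`. -/
def ExpThetaQ (g : ℕ → ℚ) : Prop :=
  ∃ (γ₁ γ₂ : ℝ), 0 < γ₁ ∧ 0 < γ₂ ∧ ∃ N' : ℕ, ∀ n : ℕ, N' ≤ n →
    (2 : ℝ) ^ (γ₁ * n) ≤ ((g n : ℚ) : ℝ) ∧ ((g n : ℚ) : ℝ) ≤ (2 : ℝ) ^ (γ₂ * n)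

/-- `f : ℕ → ℕ` is an ultimately almost PORC function: there are a quasiperiod
`p ≥ 1`, an offset `N`, and constituents `c 0, …, c (p-1) : ℕ → ℚ`, each either a
polynomial with rational coefficients or a function in `2^{Θ(n)}`, such that
`f n = c (n mod p) n` for all `n ≥ N`. -/
def UltAlmostPORC (f : ℕ → ℕ) : Prop :=
  ∃ (p : ℕ), 1 ≤ p ∧ ∃ (N : ℕ) (c : ℕ → ℕ → ℚ),
    (∀ i : ℕ, i < p →
      (∃ q : Polynomial ℚ, ∀ n : ℕ, c i n = q.eval (n : ℚ)) ∨ ExpThetaQ (c i)) ∧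
    ∀ n : ℕ, N ≤ n → (f n : ℚ) = c (n % p) n

/-!
Put `p = k!` and `C = A ^ p`, so that `(A ^ (i + p * m)) u v = (w ᵥ* C ^ m) v` with `w` the
`u`-th row of `A ^ i`. A closed walk of positive length through `x` can be shortened to one of
length at most `k`, which divides `p`; hence `C` has a loop at every vertex lying on a cycle.

Consider the vertices lying on some walk (of `C`) from the support of `w` to `v`. If one of them
has `2 ≤ (C ^ t) x x`, running around that cycle `s` times and padding with the loop at `x`
gives `2 ^ s ≤ (w ᵥ* C ^ m) v` as soon as `m` exceeds a linear function of `s`; as all entries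
of `A ^ n` are at most `B ^ n`, the residue class is then in `2^{Θ(n)}`. Otherwise, restricted to
those vertices, `C` has no cycles besides loops of weight at most `1`: ordered by their number of
ancestors it is triangular with diagonal in `{0, 1}`, so Cayley–Hamilton gives
`E ^ k * (E - 1) ^ k = 0` for the restriction `E`, and `E ^ m` is a combination of the binomial
coefficients `m.choose j`, `j < k`, i.e. a polynomial in `m`.
-/

open Polynomial Finset Filter
open scoped Matrix

namespace Matrix

section Rectangular

variable {l m n : Type*} [Fintype m]

theorem mul_apply_ne_zero_iff {M : Matrix l m ℕ} {N : Matrix m n ℕ} {x : l} {y : n} :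
    (M * N) x y ≠ 0 ↔ ∃ z, M x z ≠ 0 ∧ N z y ≠ 0 := by
  simp [mul_apply, sum_eq_zero_iff]

theorem vecMul_apply_ne_zero_iff {w : m → ℕ} {M : Matrix m n ℕ} {y : n} :
    (w ᵥ* M) y ≠ 0 ↔ ∃ z, w z ≠ 0 ∧ M z y ≠ 0 := by
  simp [vecMul_apply_eq_sum, sum_eq_zero_iff]

theorem apply_mul_apply_le_mul_apply (M : Matrix l m ℕ) (N : Matrix m n ℕ) (x : l) (z : m)
    (y : n) : M x z * N z y ≤ (M * N) x y :=
  single_le_sum (f := fun j => M x j * N j y) (fun _ _ => Nat.zero_le _) (mem_univ z)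

theorem apply_mul_apply_le_vecMul_apply (w : m → ℕ) (M : Matrix m n ℕ) (z : m) (y : n) :
    w z * M z y ≤ (w ᵥ* M) y :=
  single_le_sum (f := fun j => w j * M j y) (fun _ _ => Nat.zero_le _) (mem_univ z)

end Rectangular

variable {ι : Type*} [Fintype ι] [DecidableEq ι]

theorem pow_apply_mul_pow_apply_le (M : Matrix ι ι ℕ) (a b : ℕ) (x z y : ι) :
    (M ^ a) x z * (M ^ b) z y ≤ (M ^ (a + b)) x y := by
  rw [pow_add]
  exact apply_mul_apply_le_mul_apply _ _ _ _ _

theorem vecMul_pow_apply_mul_pow_apply_le (w : ι → ℕ) (M : Matrix ι ι ℕ) (a b : ℕ) (x y : ι) :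
    (w ᵥ* M ^ a) x * (M ^ b) x y ≤ (w ᵥ* M ^ (a + b)) y := by
  rw [pow_add, ← vecMul_vecMul]
  exact apply_mul_apply_le_vecMul_apply _ _ _ _

theorem pow_apply_self_pow_le (M : Matrix ι ι ℕ) (t s : ℕ) (x : ι) :
    ((M ^ t) x x) ^ s ≤ (M ^ (t * s)) x x := by
  induction s with
  | zero => simp
  | succ s ih =>
    calc ((M ^ t) x x) ^ (s + 1) = ((M ^ t) x x) ^ s * (M ^ t) x x := pow_succ _ _
      _ ≤ (M ^ (t * s)) x x * (M ^ t) x x := Nat.mul_le_mul_right _ ih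
      _ ≤ (M ^ (t * (s + 1))) x x := by
        rw [mul_add_one]
        exact pow_apply_mul_pow_apply_le ..

theorem pow_apply_self_ne_zero {M : Matrix ι ι ℕ} {x : ι} (h : M x x ≠ 0) (n : ℕ) :
    (M ^ n) x x ≠ 0 := by
  have := pow_apply_self_pow_le M 1 n x
  rw [pow_one, one_mul] at this
  exact Nat.pos_iff_ne_zero.mp ((Nat.pos_of_ne_zero (pow_ne_zero n h)).trans_le this)

theorem pow_apply_le_sum_pow (M : Matrix ι ι ℕ) (n : ℕ) (x y : ι) :
    (M ^ n) x y ≤ (∑ i, ∑ j, M i j) ^ n := by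
  induction n generalizing y with
  | zero => by_cases hxy : x = y <;> simp [hxy]
  | succ n ih =>
    calc (M ^ (n + 1)) x y = ∑ z, (M ^ n) x z * M z y := by rw [pow_succ, mul_apply]
      _ ≤ ∑ z, (∑ i, ∑ j, M i j) ^ n * M z y :=
        sum_le_sum fun z _ => Nat.mul_le_mul_right _ (ih z)
      _ = (∑ i, ∑ j, M i j) ^ n * ∑ z, M z y := by rw [mul_sum]
      _ ≤ (∑ i, ∑ j, M i j) ^ n * ∑ i, ∑ j, M i j := by
        gcongr with z
        exact single_le_sum (f := fun j => M z j) (fun _ _ => Nat.zero_le _) (mem_univ y)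
      _ = (∑ i, ∑ j, M i j) ^ (n + 1) := (pow_succ _ _).symm

theorem two_le_pow_add_apply_self {M : Matrix ι ι ℕ} {x y : ι} {t s : ℕ} (hxy : x ≠ y)
    (hxx : (M ^ t) x x ≠ 0) (hxx' : (M ^ s) x x ≠ 0) (hxy' : (M ^ t) x y ≠ 0)
    (hyx : (M ^ s) y x ≠ 0) : 2 ≤ (M ^ (t + s)) x x := by
  have hpair : (M ^ t) x x * (M ^ s) x x + (M ^ t) x y * (M ^ s) y x ≤ (M ^ (t + s)) x x := by
    rw [pow_add, mul_apply, ← sum_pair (f := fun j => (M ^ t) x j * (M ^ s) j x) hxy]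
    exact sum_le_sum_of_subset (subset_univ _)
  have := Nat.pos_of_ne_zero (mul_ne_zero hxx hxx')
  have := Nat.pos_of_ne_zero (mul_ne_zero hxy' hyx)
  omega

theorem exists_pow_apply_self_ne_zero_le_card (M : Matrix ι ι ℕ) (x : ι) {L : ℕ} (hL : 0 < L)
    (h : (M ^ L) x x ≠ 0) : ∃ ℓ, 0 < ℓ ∧ ℓ ≤ Fintype.card ι ∧ (M ^ ℓ) x x ≠ 0 := by
  induction L using Nat.strong_induction_on with
  | _ L ih =>
  by_cases hLc : L ≤ Fintype.card ι
  · exact ⟨L, hL, hLc, h⟩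
  -- Two of the `card ι + 1` points visited at times `0, …, card ι` coincide (pigeonhole);
  -- cutting out the closed walk between them leaves a shorter closed walk through `x`.
  have hsplit : ∀ j : Fin (Fintype.card ι + 1),
      ∃ z, (M ^ (j : ℕ)) x z ≠ 0 ∧ (M ^ (L - j)) z x ≠ 0 :=
    fun j => mul_apply_ne_zero_iff.mp (by rwa [← pow_add, Nat.add_sub_cancel' (by omega)])
  choose z hz using hsplit
  obtain ⟨a, b, hab, hzab⟩ := Fintype.exists_ne_map_eq_of_card_lt z (by simp)
  wlog hlt : a < b generalizing a b
  · exact this b a hab.symm hzab.symm (lt_of_le_of_ne (not_lt.mp hlt) hab.symm)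
  have hcut : (M ^ ((a : ℕ) + (L - b))) x x ≠ 0 := by
    rw [pow_add]
    exact mul_apply_ne_zero_iff.mpr ⟨z a, (hz a).1, hzab ▸ (hz b).2⟩
  have hb : (b : ℕ) ≤ Fintype.card ι := Nat.lt_succ_iff.mp b.isLt
  exact ih _ (by omega) (by omega) hcut

def HasLoopOnCycles (C : Matrix ι ι ℕ) : Prop :=
  ∀ x t, 0 < t → (C ^ t) x x ≠ 0 → C x x ≠ 0

theorem hasLoopOnCycles_pow_factorial (M : Matrix ι ι ℕ) :
    (M ^ (Fintype.card ι).factorial).HasLoopOnCycles := by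
  intro x t ht h
  rw [← pow_mul] at h
  obtain ⟨ℓ, hℓ, hℓc, hℓx⟩ :=
    exists_pow_apply_self_ne_zero_le_card M x (Nat.mul_pos (Nat.factorial_pos _) ht) h
  have hbound := pow_apply_self_pow_le M ℓ ((Fintype.card ι).factorial / ℓ) x
  rw [Nat.mul_div_cancel' (Nat.dvd_factorial hℓ hℓc)] at hbound
  exact Nat.pos_iff_ne_zero.mp ((Nat.pos_of_ne_zero (pow_ne_zero _ hℓx)).trans_le hbound)

open Classical in
noncomputable def strictAncestors (C : Matrix ι ι ℕ) (x : ι) : Finset ι :=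
  {z | z ≠ x ∧ ∃ t, (C ^ t) z x ≠ 0}

theorem strictAncestors_ssubset {C : Matrix ι ι ℕ} (hC : C.HasLoopOnCycles) {x y : ι}
    (hx : ∀ t, 0 < t → (C ^ t) x x ≤ 1) (hxy : x ≠ y) (hCxy : C x y ≠ 0) :
    C.strictAncestors x ⊂ C.strictAncestors y := by
  have hy : x ∈ C.strictAncestors y := by
    simp only [strictAncestors, mem_filter, mem_univ, true_and]
    exact ⟨hxy, 1, by rwa [pow_one]⟩
  refine (ssubset_iff_of_subset fun z hz => ?_).mpr ⟨x, hy, by simp [strictAncestors]⟩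
  simp only [strictAncestors, mem_filter, mem_univ, true_and] at hz ⊢
  obtain ⟨hzx, t, ht⟩ := hz
  refine ⟨?_, t + 1, ?_⟩
  · -- Otherwise `x → y → x` is a cycle, so `x` carries a loop and `(C ^ (1 + t)) x x ≥ 2`.
    rintro rfl
    have ht0 : 0 < t := Nat.pos_of_ne_zero fun h => by simp [h, hzx] at ht
    have hcycle : (C ^ (1 + t)) x x ≠ 0 := by
      rw [pow_add, pow_one]
      exact mul_apply_ne_zero_iff.mpr ⟨z, hCxy, ht⟩
    have hxx := hC x _ (by omega) hcycle
    have := two_le_pow_add_apply_self hzx.symm (by rwa [pow_one]) (pow_apply_self_ne_zero hxx t)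
      (by rwa [pow_one]) ht
    have := hx (1 + t) (by omega)
    omega
  · rw [pow_succ]
    exact mul_apply_ne_zero_iff.mpr ⟨x, ht, hCxy⟩

end Matrix

-- `a * X ^ k` is the Bézout idempotent onto the part where `X - 1` is nilpotent; there
-- `X ^ m = (1 + (X - 1)) ^ m` only has the binomial terms with `j < k` left.
theorem X_pow_sub_sum_choose_dvd {k l : ℕ} {a b : ℤ[X]}
    (hab : a * X ^ k + b * (X - 1) ^ k = 1) :
    X ^ k * (X - 1) ^ k ∣
      X ^ (k + l) - ∑ j ∈ range k, (k + l).choose j • ((X - 1) ^ j * (a * X ^ k)) := by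
  have hbinom : X ^ (k + l) * (a * X ^ k) =
      ∑ j ∈ range (k + l + 1), (k + l).choose j • ((X - 1) ^ j * (a * X ^ k)) := by
    have := add_pow (X - 1 : ℤ[X]) 1 (k + l)
    rw [sub_add_cancel] at this
    rw [this, sum_mul]
    refine sum_congr rfl fun j _ => ?_
    rw [nsmul_eq_mul]
    ring
  have hsplit := sum_range_add_sum_Ico
    (fun j => (k + l).choose j • ((X - 1) ^ j * (a * X ^ k))) (show k ≤ k + l + 1 by omega)
  have hrest : X ^ (k + l) - ∑ j ∈ range k, (k + l).choose j • ((X - 1) ^ j * (a * X ^ k)) =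
      X ^ l * b * (X ^ k * (X - 1) ^ k) +
        ∑ j ∈ Ico k (k + l + 1), (k + l).choose j • ((X - 1) ^ j * (a * X ^ k)) := by
    linear_combination -(X ^ (k + l)) * hab + hbinom - hsplit
  rw [hrest]
  refine dvd_add (dvd_mul_left _ _) (dvd_sum fun j hj => ?_)
  obtain ⟨i, rfl⟩ := Nat.exists_eq_add_of_le (mem_Ico.mp hj).1
  exact Dvd.intro ((k + l).choose (k + i) • ((X - 1) ^ i * a)) (by rw [mul_smul_comm]; ring)

theorem exists_pow_eq_sum_choose_nsmul {R : Type*} [Ring R] {M : R} {k : ℕ}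
    (hM : M ^ k * (M - 1) ^ k = 0) :
    ∃ Z : ℕ → R, ∀ m, k ≤ m → M ^ m = ∑ j ∈ range k, m.choose j • Z j := by
  obtain ⟨a, b, hab⟩ : IsCoprime ((X : ℤ[X]) ^ k) ((X - 1) ^ k) :=
    IsCoprime.pow ⟨1, -1, by ring⟩
  refine ⟨fun j => aeval M ((X - 1) ^ j * (a * X ^ k)), fun m hkm => ?_⟩
  obtain ⟨l, rfl⟩ := Nat.exists_eq_add_of_le hkm
  obtain ⟨c, hc⟩ := X_pow_sub_sum_choose_dvd (l := l) hab
  have := congrArg (aeval M) hc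
  simp only [map_sub, map_sum, map_nsmul, map_mul, map_pow, aeval_X, map_one, hM,
    zero_mul] at this ⊢
  exact sub_eq_zero.mp this

theorem exists_eval_eq_sum_mul_choose (c : ℕ → ℚ) (n : ℕ) :
    ∃ q : ℚ[X], ∀ m : ℕ, q.eval (m : ℚ) = ∑ j ∈ range n, c j * m.choose j := by
  refine ⟨∑ j ∈ range n, Polynomial.C (c j / j.factorial) * descPochhammer ℚ j, fun m => ?_⟩
  simp only [eval_finsetSum, eval_mul, eval_C, descPochhammer_eval_eq_descFactorial,
    Nat.descFactorial_eq_factorial_mul_choose, Nat.cast_mul]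
  refine sum_congr rfl fun j _ => ?_
  have : (j.factorial : ℚ) ≠ 0 := by positivity
  field_simp

namespace Matrix

variable {ι R α : Type*} [Fintype ι] [DecidableEq ι] [CommRing R] [LinearOrder α]

theorem charpoly_eq_prod_of_lt {M : Matrix ι ι R} (ρ : ι → α)
    (hρ : ∀ x y, x ≠ y → M x y ≠ 0 → ρ x < ρ y) :
    M.charpoly = ∏ i, (X - C (M i i)) := by
  let f : ι → α ×ₗ Fin (Fintype.card ι) := fun x => toLex (ρ x, Fintype.equivFin ι x)
  have hf : f.Injective := fun x y h =>
    (Fintype.equivFin ι).injective (Prod.ext_iff.mp (toLex.injective h)).2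
  let _ : LinearOrder ι := LinearOrder.lift' f hf
  convert charpoly_of_isUpperTriangular M fun x y hyx => ?_
  by_contra hxy
  have hlt : f x < f y := Prod.Lex.lt_iff.mpr (Or.inl (hρ x y (ne_of_gt hyx) hxy))
  exact lt_asymm hyx hlt

theorem pow_card_mul_sub_one_pow_card_eq_zero {M : Matrix ι ι R} (ρ : ι → α)
    (hρ : ∀ x y, x ≠ y → M x y ≠ 0 → ρ x < ρ y) (hdiag : ∀ x, M x x = 0 ∨ M x x = 1) :
    M ^ Fintype.card ι * (M - 1) ^ Fintype.card ι = 0 := by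
  have hdvd : M.charpoly ∣ (X * (X - 1)) ^ Fintype.card ι := by
    rw [M.charpoly_eq_prod_of_lt ρ hρ, ← card_univ, ← prod_const]
    refine prod_dvd_prod_of_dvd _ _ fun x _ => ?_
    rcases hdiag x with h | h <;> simp [h]
  obtain ⟨g, hg⟩ := hdvd
  have := congrArg (aeval M) hg
  rwa [map_mul, aeval_self_charpoly, zero_mul, mul_pow, map_mul, map_pow, map_pow, map_sub,
    aeval_X, map_one] at this

end Matrix

def IsEventuallyPolynomial (g : ℕ → ℕ) : Prop :=
  ∃ q : ℚ[X], ∀ᶠ m in atTop, (g m : ℚ) = q.eval (m : ℚ)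

def HasExpLowerBound (g : ℕ → ℕ) : Prop :=
  ∃ N t, 0 < t ∧ ∀ s m, N + t * s ≤ m → 2 ^ s ≤ g m

namespace Matrix

variable {ι : Type*} [Fintype ι] [DecidableEq ι] (C : Matrix ι ι ℕ) (w : ι → ℕ) (v : ι)

def IsOnWalk (x : ι) : Prop :=
  (∃ a, (w ᵥ* C ^ a) x ≠ 0) ∧ ∃ b, (C ^ b) x v ≠ 0

open Classical in
noncomputable def walkRestriction : Matrix ι ι ℚ :=
  of fun x y => if C.IsOnWalk w v x ∧ C.IsOnWalk w v y then (C x y : ℚ) else 0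

variable {C w v}

theorem hasExpLowerBound_of_isOnWalk {x : ι} (hx : C.IsOnWalk w v x) (hxx : C x x ≠ 0) {t : ℕ}
    (ht : 0 < t) (h2 : 2 ≤ (C ^ t) x x) : HasExpLowerBound fun m => (w ᵥ* C ^ m) v := by
  obtain ⟨⟨a, ha⟩, b, hb⟩ := hx
  refine ⟨a + b, t, ht, fun s m hm => ?_⟩
  obtain ⟨r, rfl⟩ : ∃ r, m = a + (t * s + r + b) := ⟨m - (a + b + t * s), by omega⟩
  have hcycle : 2 ^ s ≤ (C ^ (t * s)) x x :=
    (Nat.pow_le_pow_left h2 s).trans (pow_apply_self_pow_le C t s x)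
  have hpad : 1 ≤ (C ^ r) x x := Nat.one_le_iff_ne_zero.mpr (pow_apply_self_ne_zero hxx r)
  calc 2 ^ s ≤ (C ^ (t * s)) x x * (C ^ r) x x * (C ^ b) x v :=
        le_mul_of_le_of_one_le (le_mul_of_le_of_one_le hcycle hpad)
          (Nat.one_le_iff_ne_zero.mpr hb)
    _ ≤ (C ^ (t * s + r + b)) x v :=
        (Nat.mul_le_mul_right _ (pow_apply_mul_pow_apply_le ..)).trans
          (pow_apply_mul_pow_apply_le ..)
    _ ≤ (w ᵥ* C ^ a) x * (C ^ (t * s + r + b)) x v :=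
        le_mul_of_one_le_left (Nat.zero_le _) (Nat.one_le_iff_ne_zero.mpr ha)
    _ ≤ (w ᵥ* C ^ (a + (t * s + r + b))) v := vecMul_pow_apply_mul_pow_apply_le ..

theorem vecMul_pow_apply_eq_walkRestriction (m : ℕ) {y : ι} (hy : ∃ b, (C ^ b) y v ≠ 0) :
    ((w ᵥ* C ^ m) y : ℚ) = ((Nat.cast ∘ w) ᵥ* C.walkRestriction w v ^ m) y := by
  induction m generalizing y with
  | zero => simp
  | succ m ih =>
    rw [pow_succ, pow_succ, ← vecMul_vecMul, ← vecMul_vecMul, vecMul_apply_eq_sum (w ᵥ* C ^ m),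
      vecMul_apply_eq_sum (_ ᵥ* _ ^ m), Nat.cast_sum]
    refine sum_congr rfl fun z _ => ?_
    rw [Nat.cast_mul]
    by_cases hzy : C z y = 0
    · simp [walkRestriction, hzy]
    obtain ⟨b, hb⟩ := hy
    have hz : ∃ b, (C ^ b) z v ≠ 0 := ⟨1 + b, by
      rw [pow_add, pow_one]
      exact mul_apply_ne_zero_iff.mpr ⟨y, hzy, hb⟩⟩
    rw [← ih hz]
    by_cases hwz : (w ᵥ* C ^ m) z = 0
    · simp [hwz]
    have hwy : (w ᵥ* C ^ (m + 1)) y ≠ 0 := by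
      rw [pow_succ, ← vecMul_vecMul]
      exact vecMul_apply_ne_zero_iff.mpr ⟨z, hwz, hzy⟩
    simp [walkRestriction, show C.IsOnWalk w v z from ⟨⟨m, hwz⟩, hz⟩,
      show C.IsOnWalk w v y from ⟨⟨m + 1, hwy⟩, b, hb⟩]

theorem walkRestriction_apply_ne_zero {x y : ι} (h : C.walkRestriction w v x y ≠ 0) :
    C.IsOnWalk w v x ∧ C x y ≠ 0 := by
  by_cases hxy : C.IsOnWalk w v x ∧ C.IsOnWalk w v y
  · refine ⟨hxy.1, fun hC => h ?_⟩
    simp [walkRestriction, hxy, hC]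
  · simp [walkRestriction, hxy] at h

theorem isEventuallyPolynomial_vecMul_pow_apply (hC : C.HasLoopOnCycles)
    (hsmall : ∀ x, C.IsOnWalk w v x → ∀ t, 0 < t → (C ^ t) x x ≤ 1) :
    IsEventuallyPolynomial fun m => (w ᵥ* C ^ m) v := by
  set E := C.walkRestriction w v
  have hE : E ^ Fintype.card ι * (E - 1) ^ Fintype.card ι = 0 := by
    refine pow_card_mul_sub_one_pow_card_eq_zero (fun x => #(C.strictAncestors x))
      (fun x y hxy h => ?_) fun x => ?_
    · obtain ⟨hx, hCxy⟩ := walkRestriction_apply_ne_zero h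
      exact card_lt_card (strictAncestors_ssubset hC (hsmall x hx) hxy hCxy)
    · by_cases hx : C.IsOnWalk w v x
      · have := hsmall x hx 1 one_pos
        rw [pow_one] at this
        interval_cases h : C x x <;> simp [E, walkRestriction, hx, h]
      · simp [E, walkRestriction, hx]
  obtain ⟨Z, hZ⟩ := exists_pow_eq_sum_choose_nsmul hE
  obtain ⟨q, hq⟩ :=
    exists_eval_eq_sum_mul_choose (fun j => ((Nat.cast ∘ w) ᵥ* Z j) v) (Fintype.card ι)
  refine ⟨q, ?_⟩
  filter_upwards [eventually_ge_atTop (Fintype.card ι)] with m hm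
  rw [hq, vecMul_pow_apply_eq_walkRestriction (v := v) (y := v) m ⟨0, by simp⟩, hZ m hm,
    vecMul_sum, Finset.sum_apply]
  refine sum_congr rfl fun j _ => ?_
  rw [vecMul_smul, Pi.smul_apply, nsmul_eq_mul, mul_comm]

theorem isEventuallyPolynomial_or_hasExpLowerBound (hC : C.HasLoopOnCycles) :
    IsEventuallyPolynomial (fun m => (w ᵥ* C ^ m) v) ∨
      HasExpLowerBound (fun m => (w ᵥ* C ^ m) v) := by
  by_cases h : ∃ x, C.IsOnWalk w v x ∧ ∃ t, 0 < t ∧ 2 ≤ (C ^ t) x x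
  · obtain ⟨x, hx, t, ht, h2⟩ := h
    exact .inr (hasExpLowerBound_of_isOnWalk hx (hC x t ht (by omega)) ht h2)
  · push Not at h
    exact .inl (isEventuallyPolynomial_vecMul_pow_apply hC fun x hx t ht =>
      Nat.le_of_lt_succ (h x hx t ht))

end Matrix

theorem expThetaQ_of_bounds {g : ℕ → ℚ} {N T B : ℕ} (hT : 0 < T) (hB : 0 < B)
    (hlow : ∀ s n, N + T * s ≤ n → 2 ^ s ≤ g n) (hup : ∀ n, g n ≤ 2 ^ (B * n)) :
    ExpThetaQ g := by
  refine ⟨1 / (2 * T), B, by positivity, by exact_mod_cast hB, 2 * (N + T),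
    fun n hn => ⟨?_, ?_⟩⟩
  · have hdiv := Nat.div_add_mod (n - N) T
    have hmod := Nat.mod_lt (n - N) hT
    generalize (n - N) / T = s at hdiv
    have hexp : 1 / (2 * T : ℝ) * n ≤ s := by
      rw [div_mul_eq_mul_div, one_mul, div_le_iff₀ (by positivity)]
      have : (n : ℝ) ≤ 2 * (T * s) := by exact_mod_cast (by omega : n ≤ 2 * (T * s))
      linarith
    calc (2 : ℝ) ^ (1 / (2 * T : ℝ) * n) ≤ 2 ^ (s : ℝ) :=
          Real.rpow_le_rpow_of_exponent_le one_le_two hexp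
      _ = ((2 ^ s : ℚ) : ℝ) := by rw [Real.rpow_natCast]; push_cast; rfl
      _ ≤ (g n : ℝ) := by exact_mod_cast hlow s n (by omega)
  · calc (g n : ℝ) ≤ ((2 ^ (B * n) : ℚ) : ℝ) := by exact_mod_cast hup n
      _ = 2 ^ ((B : ℝ) * n) := by push_cast; rw [← Real.rpow_natCast]; push_cast; rfl

theorem IsEventuallyPolynomial.exists_eval_of_mod_eq {f : ℕ → ℕ} {p i : ℕ} (hp : 0 < p)
    (h : IsEventuallyPolynomial fun m => f (i + p * m)) :
    ∃ q : ℚ[X], ∀ᶠ n in atTop, n % p = i → (f n : ℚ) = q.eval (n : ℚ) := by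
  obtain ⟨q, hq⟩ := h
  refine ⟨q.comp (Polynomial.C (p : ℚ)⁻¹ * (X - Polynomial.C (i : ℚ))), ?_⟩
  filter_upwards [(Nat.tendsto_div_const_atTop hp.ne').eventually hq] with n hn hni
  have hn' : i + p * (n / p) = n := by rw [← hni, Nat.mod_add_div]
  have hcast : (n : ℚ) = i + p * (n / p : ℕ) := by exact_mod_cast hn'.symm
  rw [hn'] at hn
  rw [hn, eval_comp, eval_mul, eval_sub, eval_C, eval_C, eval_X, hcast, add_sub_cancel_left,
    inv_mul_cancel_left₀ (by exact_mod_cast hp.ne')]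

-- Off its residue class the constituent is never evaluated; `2 ^ n` keeps it in `2^{Θ(n)}`.
theorem expThetaQ_ite_mod {f : ℕ → ℕ} {p i B : ℕ} (hp : 0 < p) (hB : ∀ n, f n ≤ B ^ n)
    (h : HasExpLowerBound fun m => f (i + p * m)) :
    ExpThetaQ fun n => if n % p = i then (f n : ℚ) else 2 ^ n := by
  obtain ⟨N, t, ht, hlow⟩ := h
  have hexp : ∀ n, n ≤ (B + 1) * n := fun n => Nat.le_mul_of_pos_left n (Nat.succ_pos B)
  refine expThetaQ_of_bounds (N := i + p * N) (T := p * t) (B := B + 1) (by positivity)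
    (Nat.succ_pos B) (fun s n hn => ?_) fun n => ?_
  · split_ifs with hni
    · have hn' : i + p * (n / p) = n := by rw [← hni, Nat.mod_add_div]
      have hs : N + t * s ≤ n / p := by
        refine Nat.le_of_mul_le_mul_left ?_ hp
        rw [mul_add, ← mul_assoc]
        omega
      have := hlow s (n / p) hs
      simp only [hn'] at this
      exact_mod_cast this
    · have : s ≤ n := (Nat.le_mul_of_pos_left s (Nat.mul_pos hp ht)).trans (by omega)
      exact pow_le_pow_right₀ one_le_two this
  · split_ifs
    · have hpow : B ^ n ≤ 2 ^ ((B + 1) * n) := calc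
        B ^ n ≤ (2 ^ B) ^ n := Nat.pow_le_pow_left Nat.lt_two_pow_self.le n
        _ ≤ 2 ^ ((B + 1) * n) := by
          rw [← pow_mul]
          exact Nat.pow_le_pow_right two_pos (Nat.mul_le_mul_right n B.le_succ)
      exact_mod_cast (hB n).trans hpow
    · exact pow_le_pow_right₀ one_le_two (hexp n)

theorem ultAlmostPORC_of_residue_classes {f : ℕ → ℕ} {p B : ℕ} (hp : 0 < p)
    (hB : ∀ n, f n ≤ B ^ n)
    (h : ∀ i < p, IsEventuallyPolynomial (fun m => f (i + p * m)) ∨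
      HasExpLowerBound (fun m => f (i + p * m))) :
    UltAlmostPORC f := by
  have hc : ∀ i < p, ∃ c : ℕ → ℚ, ((∃ q : ℚ[X], ∀ n, c n = q.eval (n : ℚ)) ∨ ExpThetaQ c) ∧
      ∀ᶠ n in atTop, n % p = i → (f n : ℚ) = c n := by
    intro i hi
    rcases h i hi with hpoly | hexp
    · obtain ⟨q, hq⟩ := hpoly.exists_eval_of_mod_eq hp
      exact ⟨fun n => q.eval (n : ℚ), .inl ⟨q, fun _ => rfl⟩, hq⟩
    · exact ⟨_, .inr (expThetaQ_ite_mod hp hB hexp), .of_forall fun n hn => by simp [hn]⟩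
  choose! c hc using hc
  have hall : ∀ᶠ n in atTop, ∀ i ∈ range p, n % p = i → (f n : ℚ) = c i n :=
    (eventually_all_finset _).mpr fun i hi => (hc i (mem_range.mp hi)).2
  obtain ⟨N, hN⟩ := eventually_atTop.mp hall
  exact ⟨p, hp, N, c, fun i hi => (hc i hi).1,
    fun n hn => hN n hn _ (mem_range.mpr (Nat.mod_lt n hp)) rfl⟩

theorem matrix_power_entry_ultAlmostPORC_general (k : ℕ)
    (A : Matrix (Fin k) (Fin k) ℕ) (u v : Fin k) :
    UltAlmostPORC (fun n => (A ^ n) u v) := by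
  refine ultAlmostPORC_of_residue_classes (Nat.factorial_pos k)
    (fun n => A.pow_apply_le_sum_pow n u v) fun i _ => ?_
  have hrow : ∀ m, (A ^ (i + k.factorial * m)) u v = ((A ^ i) u ᵥ* (A ^ k.factorial) ^ m) v :=
    fun m => by rw [pow_add, pow_mul, Matrix.mul_apply_eq_vecMul]
  simpa only [hrow] using Matrix.isEventuallyPolynomial_or_hasExpLowerBound
    (by simpa using A.hasLoopOnCycles_pow_factorial)

/-- every entry of the powers of a nonnegative integer matrix is an
ultimately almost PORC function of the exponent. -/
theorem matrix_power_entry_ultAlmostPORC (k : ℕ) (hk : 1 ≤ k)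
    (A : Matrix (Fin k) (Fin k) ℕ) (u v : Fin k) :
    UltAlmostPORC (fun n => (A ^ n) u v) :=
  matrix_power_entry_ultAlmostPORC_general k A u v
end
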